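/- arXiv:1702.07064 — 6 statements merged into one kernel-verified Lean document; each statement's English description precedes it below -/
import Mathlib

section
/- Let U ⊆ ℝ^m be a convex set and let A be an n×n real matrix and B an n×m real matrix. Let I be a finite nonempty index set, z : I → ℝ^n stored states and v : I → ℝ^m stored inputs with v i ∈ U for every i, such that for every i ∈ I there exists j ∈ I with z j = A (z i) + B (v i). Then the convex safe set CS = convexHull ℝ {z i : i ∈ I} is control invariant: for every x ∈ CS there exists u ∈ U such that A x + B u ∈ CS. -/
/-! Lift a point of `convexHull (range z)` to a point `(x, u)` of the convex hull of the stored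
pairs `(z i, v i)`. The dynamics `(x, u) ↦ A x + B u` is linear, so it maps this hull onto the
hull of the successors `A (z i) + B (v i)`, each of which is a stored state; and `u` lies in the
hull of the stored inputs, hence in the convex set `U`. -/

open Set

section

variable {𝕜 E F ι : Type*} [Semiring 𝕜] [PartialOrder 𝕜]
  [AddCommMonoid E] [Module 𝕜 E] [AddCommMonoid F] [Module 𝕜 F]

theorem LinearMap.image_convexHull_range {G : Type*} [AddCommMonoid G] [Module 𝕜 G]
    (f : E →ₗ[𝕜] G) (w : ι → E) :
    f '' convexHull 𝕜 (Set.range w) = convexHull 𝕜 (Set.range fun i ↦ f (w i)) := by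
  rw [f.image_convexHull, ← Set.range_comp]
  rfl

theorem exists_prodMk_mem_convexHull_range {z : ι → E} (v : ι → F) {x : E}
    (hx : x ∈ convexHull 𝕜 (range z)) :
    ∃ u, (x, u) ∈ convexHull 𝕜 (range fun i ↦ (z i, v i)) := by
  rw [show range z = range fun i ↦ LinearMap.fst 𝕜 E F (z i, v i) from rfl,
    ← LinearMap.image_convexHull_range] at hx
  obtain ⟨⟨x', u⟩, hxu, rfl⟩ := hx
  exact ⟨u, hxu⟩

theorem exists_mem_convexHull_range_map_mem_convexHull_range (f : E × F →ₗ[𝕜] E)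
    {z : ι → E} {v : ι → F} (hsucc : ∀ i, ∃ j, z j = f (z i, v i)) {x : E}
    (hx : x ∈ convexHull 𝕜 (range z)) :
    ∃ u ∈ convexHull 𝕜 (range v), f (x, u) ∈ convexHull 𝕜 (range z) := by
  obtain ⟨u, hxu⟩ := exists_prodMk_mem_convexHull_range v hx
  refine ⟨u, ?_, ?_⟩
  · have hu := mem_image_of_mem (LinearMap.snd 𝕜 E F) hxu
    rwa [LinearMap.image_convexHull_range] at hu
  · have hfxu := mem_image_of_mem f hxu
    rw [LinearMap.image_convexHull_range] at hfxu
    exact convexHull_mono (range_subset_iff.mpr hsucc : range (fun i ↦ f (z i, v i)) ⊆ _) hfxu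

end

theorem convex_safe_set_control_invariant_general
    {n m : ℕ} {ι : Type*}
    (A : Matrix (Fin n) (Fin n) ℝ) (B : Matrix (Fin n) (Fin m) ℝ)
    (U : Set (Fin m → ℝ)) (hU : Convex ℝ U)
    (z : ι → Fin n → ℝ) (v : ι → Fin m → ℝ)
    (hv : ∀ i, v i ∈ U)
    (hsucc : ∀ i, ∃ j, z j = A.mulVec (z i) + B.mulVec (v i)) :
    ∀ x ∈ convexHull ℝ (Set.range z),
      ∃ u ∈ U, A.mulVec x + B.mulVec u ∈ convexHull ℝ (Set.range z) := by
  intro x hx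
  obtain ⟨u, hu, hxu⟩ :=
    exists_mem_convexHull_range_map_mem_convexHull_range
      (A.mulVecLin.coprod B.mulVecLin) hsucc hx
  exact ⟨u, hU.convexHull_subset_iff.mpr (range_subset_iff.mpr hv) hu, hxu⟩

/-- The convex safe set `CS = convexHull ℝ {z i : i ∈ I}` built from stored
states with stored successors is control invariant for `x⁺ = A x + B u`. -/
theorem convex_safe_set_control_invariant
    {n m : ℕ} {ι : Type*} [Fintype ι] [Nonempty ι]
    (A : Matrix (Fin n) (Fin n) ℝ) (B : Matrix (Fin n) (Fin m) ℝ)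
    (U : Set (Fin m → ℝ)) (hU : Convex ℝ U)
    (z : ι → Fin n → ℝ) (v : ι → Fin m → ℝ)
    (hv : ∀ i, v i ∈ U)
    (hsucc : ∀ i, ∃ j, z j = A.mulVec (z i) + B.mulVec (v i)) :
    ∀ x ∈ convexHull ℝ (Set.range z),
      ∃ u ∈ U, A.mulVec x + B.mulVec u ∈ convexHull ℝ (Set.range z) :=
  convex_safe_set_control_invariant_general A B U hU z v hv hsucc
end

section
/- Let A be an n×n real matrix, B an n×m real matrix, U ⊆ ℝ^m convex, and h : ℝ^n × ℝ^m → ℝ jointly convex. Let I be a finite nonempty index set with stored states z : I → ℝ^n, stored inputs v : I → ℝ^m with v i ∈ U, a successor map σ : I → I with z (σ i) = A (z i) + B (v i) for all i, and stored costs c : I → ℝ satisfying c i = h(z i, v i) + c (σ i) for all i. Let p be the barycentric cost function built from z and c, and CS = convexHull ℝ {z i : i ∈ I}. Then for every x ∈ CS there exists u ∈ U such that A x + B u ∈ CS and p(A x + B u) ≤ p(x) − h(x, u). -/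
/-!
Write `x = ∑ λ i • z i` with optimal barycentric weights `λ` and reuse them on the stored
inputs: `u = ∑ λ i • v i` lies in `U`, and by linearity `A x + B u = ∑ λ i • z (σ i)`. Pushing
`λ` forward along `σ` gives admissible weights for this successor with cost
`∑ λ i * c (σ i) = p x - ∑ λ i * h (z i) (v i)`, and Jensen's inequality for the jointly convex
`h` bounds the last sum below by `h x u`.
-/

/-- The barycentric cost function built from stored points `z` and stored costs `c`:
`p(x) = sInf { ∑ i, λ i * c i : λ ≥ 0, ∑ λ = 1, ∑ λ • z = x }`. -/
noncomputable def barycentric {n : ℕ} {ι : Type*} [Fintype ι]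
    (z : ι → Fin n → ℝ) (c : ι → ℝ) (x : Fin n → ℝ) : ℝ :=
  sInf {s : ℝ | ∃ lam : ι → ℝ, (∀ i, 0 ≤ lam i) ∧ (∑ i, lam i) = 1 ∧
    (∑ i, lam i • z i) = x ∧ s = ∑ i, lam i * c i}

open Finset

section ConvexCombination

variable {ι κ E F : Type*} [Fintype ι] [Fintype κ]

theorem convexHull_range_eq_image_stdSimplex [AddCommGroup E] [Module ℝ E] (v : ι → E) :
    convexHull ℝ (Set.range v) = (fun w : ι → ℝ => ∑ i, w i • v i) '' stdSimplex ℝ ι := by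
  classical
  have hlin : (fun w : ι → ℝ => ∑ i, w i • v i) = Fintype.linearCombination ℝ v := by
    ext w
    rw [Fintype.linearCombination_apply]
  rw [hlin, ← convexHull_rangle_single_eq_stdSimplex, LinearMap.image_convexHull,
    ← Set.range_comp]
  congr 2
  ext i
  simp

theorem sum_fiberwise_smul [AddCommMonoid E] [Module ℝ E] [DecidableEq ι] (σ : κ → ι)
    (w : κ → ℝ) (v : ι → E) :
    ∑ i, (∑ k with σ k = i, w k) • v i = ∑ k, w k • v (σ k) := by
  rw [← sum_fiberwise univ σ (fun k => w k • v (σ k))]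
  refine sum_congr rfl fun i _ => ?_
  rw [sum_smul]
  exact sum_congr rfl fun k hk => by rw [(mem_filter.mp hk).2]

theorem ConvexOn.map_sum_pair_le [AddCommGroup E] [Module ℝ E] [AddCommGroup F] [Module ℝ F]
    {h : E → F → ℝ} (hconv : ConvexOn ℝ Set.univ (fun q : E × F => h q.1 q.2))
    {w : ι → ℝ} (hw : w ∈ stdSimplex ℝ ι) (x : ι → E) (y : ι → F) :
    h (∑ i, w i • x i) (∑ i, w i • y i) ≤ ∑ i, w i * h (x i) (y i) := by
  have := hconv.map_sum_le (t := univ) (w := w) (p := fun i => (x i, y i))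
    (fun i _ => hw.1 i) hw.2 (fun i _ => Set.mem_univ _)
  simpa [Prod.fst_sum, Prod.snd_sum] using this

end ConvexCombination

section Barycentric

variable {n : ℕ} {ι κ : Type*} [Fintype ι] [Fintype κ] (z : ι → Fin n → ℝ) (c : ι → ℝ)

def barycentricWeights (x : Fin n → ℝ) : Set (ι → ℝ) :=
  {w | w ∈ stdSimplex ℝ ι ∧ ∑ i, w i • z i = x}

theorem isCompact_barycentricWeights (x : Fin n → ℝ) : IsCompact (barycentricWeights z x) :=
  (isCompact_stdSimplex ℝ ι).inter_right (isClosed_eq (by fun_prop) continuous_const)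

theorem barycentric_eq_sInf_image (x : Fin n → ℝ) :
    barycentric z c x = sInf ((fun w => ∑ i, w i * c i) '' barycentricWeights z x) := by
  unfold barycentric barycentricWeights stdSimplex
  congr 1
  ext s
  simp only [Set.mem_ofPred_eq, Set.mem_image, and_assoc, eq_comm]

theorem barycentric_le {w : ι → ℝ} (hw : w ∈ stdSimplex ℝ ι) :
    barycentric z c (∑ i, w i • z i) ≤ ∑ i, w i * c i := by
  rw [barycentric_eq_sInf_image]
  exact csInf_le (((isCompact_barycentricWeights z _).image (by fun_prop)).bddBelow)
    ⟨w, ⟨hw, rfl⟩, rfl⟩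

theorem exists_barycentric_eq {x : Fin n → ℝ} (hx : x ∈ convexHull ℝ (Set.range z)) :
    ∃ w ∈ stdSimplex ℝ ι, ∑ i, w i • z i = x ∧ barycentric z c x = ∑ i, w i * c i := by
  rw [convexHull_range_eq_image_stdSimplex] at hx
  obtain ⟨w₀, hw₀, hx⟩ := hx
  obtain ⟨w, ⟨hw, hwx⟩, hmin⟩ :=
    ((isCompact_barycentricWeights z x).image (by fun_prop : Continuous fun w : ι → ℝ =>
      ∑ i, w i * c i)).sInf_mem ⟨_, ⟨w₀, ⟨hw₀, hx⟩, rfl⟩⟩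
  exact ⟨w, hw, hwx, by rw [barycentric_eq_sInf_image, ← hmin]⟩

theorem barycentric_comp_le (σ : κ → ι) {w : κ → ℝ} (hw : w ∈ stdSimplex ℝ κ) :
    barycentric z c (∑ k, w k • z (σ k)) ≤ ∑ k, w k * c (σ k) := by
  classical
  have hpushforward : (fun i => ∑ k with σ k = i, w k) ∈ stdSimplex ℝ ι :=
    ⟨fun i => sum_nonneg fun k _ => hw.1 k, by rw [sum_fiberwise univ σ w, hw.2]⟩
  calc barycentric z c (∑ k, w k • z (σ k))
      = barycentric z c (∑ i, (∑ k with σ k = i, w k) • z i) := by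
        rw [sum_fiberwise_smul σ w z]
    _ ≤ ∑ i, (∑ k with σ k = i, w k) * c i := barycentric_le z c hpushforward
    _ = ∑ k, w k * c (σ k) := by simpa only [smul_eq_mul] using sum_fiberwise_smul σ w c

end Barycentric

theorem barycentric_decrease_on_convex_safe_set_general
    {n m : ℕ} {ι : Type*} [Fintype ι]
    (A : Matrix (Fin n) (Fin n) ℝ) (B : Matrix (Fin n) (Fin m) ℝ)
    (U : Set (Fin m → ℝ)) (hU : Convex ℝ U)
    (h : (Fin n → ℝ) → (Fin m → ℝ) → ℝ)
    (hconv : ConvexOn ℝ Set.univ (fun q : (Fin n → ℝ) × (Fin m → ℝ) => h q.1 q.2))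
    (z : ι → Fin n → ℝ) (v : ι → Fin m → ℝ) (hv : ∀ i, v i ∈ U)
    (σ : ι → ι) (hσ : ∀ i, z (σ i) = A.mulVec (z i) + B.mulVec (v i))
    (c : ι → ℝ) (hc : ∀ i, c i = h (z i) (v i) + c (σ i)) :
    ∀ x ∈ convexHull ℝ (Set.range z),
      ∃ u ∈ U, A.mulVec x + B.mulVec u ∈ convexHull ℝ (Set.range z) ∧
        barycentric z c (A.mulVec x + B.mulVec u) ≤ barycentric z c x - h x u := by
  intro x hx
  obtain ⟨w, hw, rfl, hp⟩ := exists_barycentric_eq z c hx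
  have hstep : A.mulVec (∑ i, w i • z i) + B.mulVec (∑ i, w i • v i) = ∑ i, w i • z (σ i) := by
    simp only [Matrix.mulVec_sum, Matrix.mulVec_smul, hσ, smul_add, sum_add_distrib]
  refine ⟨∑ i, w i • v i, hU.sum_mem (fun i _ => hw.1 i) hw.2 fun i _ => hv i, ?_, ?_⟩
  · rw [hstep]
    exact (convex_convexHull ℝ _).sum_mem (fun i _ => hw.1 i) hw.2
      fun i _ => subset_convexHull ℝ _ ⟨σ i, rfl⟩
  · calc barycentric z c (A.mulVec (∑ i, w i • z i) + B.mulVec (∑ i, w i • v i))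
        ≤ ∑ i, w i * c (σ i) := hstep ▸ barycentric_comp_le z c σ hw
      _ = ∑ i, w i * c i - ∑ i, w i * h (z i) (v i) := by
        rw [← sum_sub_distrib]
        exact sum_congr rfl fun i _ => by rw [hc i]; ring
      _ ≤ barycentric z c (∑ i, w i • z i) - h (∑ i, w i • z i) (∑ i, w i • v i) := by
        linarith [hconv.map_sum_pair_le hw z v]

/-- On the convex safe set, there is an admissible input keeping the state
in the convex safe set and decreasing the barycentric cost by at least the stage cost. -/
theorem barycentric_decrease_on_convex_safe_set
    {n m : ℕ} {ι : Type*} [Fintype ι] [Nonempty ι]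
    (A : Matrix (Fin n) (Fin n) ℝ) (B : Matrix (Fin n) (Fin m) ℝ)
    (U : Set (Fin m → ℝ)) (hU : Convex ℝ U)
    (h : (Fin n → ℝ) → (Fin m → ℝ) → ℝ)
    (hconv : ConvexOn ℝ Set.univ (fun q : (Fin n → ℝ) × (Fin m → ℝ) => h q.1 q.2))
    (z : ι → Fin n → ℝ) (v : ι → Fin m → ℝ) (hv : ∀ i, v i ∈ U)
    (σ : ι → ι) (hσ : ∀ i, z (σ i) = A.mulVec (z i) + B.mulVec (v i))
    (c : ι → ℝ) (hc : ∀ i, c i = h (z i) (v i) + c (σ i)) :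
    ∀ x ∈ convexHull ℝ (Set.range z),
      ∃ u ∈ U, A.mulVec x + B.mulVec u ∈ convexHull ℝ (Set.range z) ∧
        barycentric z c (A.mulVec x + B.mulVec u) ≤ barycentric z c x - h x u :=
  barycentric_decrease_on_convex_safe_set_general A B U hU h hconv z v hv σ hσ c hc
end

section
/- Let A be an n×n real matrix, B an n×m real matrix, X ⊆ ℝ^n and U ⊆ ℝ^m convex sets. Let I be a finite nonempty index set with stored states z : I → ℝ^n satisfying z i ∈ X and stored inputs v : I → ℝ^m with v i ∈ U, such that for every i ∈ I there exists j ∈ I with z j = A (z i) + B (v i), and let CS = convexHull ℝ {z i : i ∈ I}. Fix a horizon N ≥ 1. If the inputs u_0, …, u_{N−1} ∈ U together with the states x_0 = x, x_{k+1} = A x_k + B u_k are feasible for initial state x (i.e., x_k ∈ X for k = 0, …, N−1 and x_N ∈ CS), then the LMPC problem is also feasible for the successor state x_1 = A x + B u_0: there exist inputs u'_0, …, u'_{N−1} ∈ U whose generated states x'_0 = x_1, x'_{k+1} = A x'_k + B u'_k satisfy x'_k ∈ X for k = 0, …, N−1 and x'_N ∈ CS. -/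
/-!
The convex hull `CS` of the sampled states is control invariant: a point `∑ λᵢ zᵢ` of `CS` is
sent back into `CS` by the input `∑ λᵢ vᵢ ∈ U`, because the dynamics are linear and every `zᵢ`
is sent by `vᵢ` to a sampled state. So a feasible trajectory from `x` can be shifted by one
step and completed by such an input at its end, and it stays feasible: its last constrained
state is the old terminal state, which lies in `CS ⊆ X`.
-/

/-- Feasibility of the LMPC finite-time optimal control problem with horizon `N` at
initial state `x`: the inputs `u 0, …, u (N-1)` and the states `xs 0 = x`,
`xs (k+1) = A (xs k) + B (u k)` satisfy the state, input and terminal constraints. -/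
def Feasible {n m : ℕ} (A : Matrix (Fin n) (Fin n) ℝ) (B : Matrix (Fin n) (Fin m) ℝ)
    (X : Set (Fin n → ℝ)) (U : Set (Fin m → ℝ)) (CS : Set (Fin n → ℝ)) (N : ℕ)
    (x : Fin n → ℝ) (u : ℕ → Fin m → ℝ) (xs : ℕ → Fin n → ℝ) : Prop :=
  xs 0 = x ∧ (∀ k < N, xs (k + 1) = A.mulVec (xs k) + B.mulVec (u k)) ∧
    (∀ k < N, xs k ∈ X) ∧ (∀ k < N, u k ∈ U) ∧ xs N ∈ CS

open Set

theorem exists_mem_convexHull_range_of_mem_convexHull_range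
    {E F ι : Type*} [AddCommGroup E] [Module ℝ E] [AddCommGroup F] [Module ℝ F]
    (f : E →ₗ[ℝ] E) (g : F →ₗ[ℝ] E) (z : ι → E) (v : ι → F)
    (hsucc : ∀ i, ∃ j, z j = f (z i) + g (v i)) {y : E} (hy : y ∈ convexHull ℝ (range z)) :
    ∃ w ∈ convexHull ℝ (range v), f y + g w ∈ convexHull ℝ (range z) := by
  set P := range fun i => (z i, v i)
  have hfst : range z = LinearMap.fst ℝ E F '' P := by rw [← range_comp]; rfl
  have hsnd : range v = LinearMap.snd ℝ E F '' P := by rw [← range_comp]; rfl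
  have hdyn : f.coprod g '' P ⊆ range z := by
    rintro _ ⟨_, ⟨i, rfl⟩, rfl⟩
    obtain ⟨j, hj⟩ := hsucc i
    exact ⟨j, hj⟩
  rw [hfst, ← LinearMap.image_convexHull] at hy
  obtain ⟨⟨y, w⟩, hp, rfl⟩ := hy
  refine ⟨w, ?_, ?_⟩
  · rw [hsnd, ← LinearMap.image_convexHull]
    exact mem_image_of_mem _ hp
  · refine convexHull_mono hdyn ?_
    rw [← LinearMap.image_convexHull]
    exact mem_image_of_mem _ hp

section Trajectory

variable {n m : ℕ} {A : Matrix (Fin n) (Fin n) ℝ} {B : Matrix (Fin n) (Fin m) ℝ}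
  {X : Set (Fin n → ℝ)} {U : Set (Fin m → ℝ)} {CS : Set (Fin n → ℝ)} {N : ℕ}
  {x : Fin n → ℝ} {u : ℕ → Fin m → ℝ} {xs : ℕ → Fin n → ℝ}

theorem Feasible.snoc (h : Feasible A B X U CS N x u xs) (hCS : CS ⊆ X) {w : Fin m → ℝ}
    (hw : w ∈ U) (hstep : A.mulVec (xs N) + B.mulVec w ∈ CS) :
    Feasible A B X U CS (N + 1) x (Function.update u N w)
      (Function.update xs (N + 1) (A.mulVec (xs N) + B.mulVec w)) := by
  obtain ⟨hx0, hdyn, hstate, hinput, hterm⟩ := h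
  refine ⟨?_, fun k hk => ?_, fun k hk => ?_, fun k hk => ?_, ?_⟩
  · rwa [Function.update_of_ne (by omega)]
  · rcases Nat.lt_succ_iff_lt_or_eq.1 hk with hk | rfl
    · rw [Function.update_of_ne (by omega), Function.update_of_ne (by omega),
        Function.update_of_ne hk.ne, hdyn k hk]
    · rw [Function.update_self, Function.update_self, Function.update_of_ne (by omega)]
  · rw [Function.update_of_ne (by omega)]
    rcases Nat.lt_succ_iff_lt_or_eq.1 hk with hk | rfl
    exacts [hstate k hk, hCS hterm]
  · rcases Nat.lt_succ_iff_lt_or_eq.1 hk with hk | rfl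
    · exact (Function.update_of_ne hk.ne w u).symm ▸ hinput k hk
    · rwa [Function.update_self]
  · rwa [Function.update_self]

theorem Feasible.tail (h : Feasible A B X U CS (N + 1) x u xs) :
    Feasible A B X U CS N (A.mulVec x + B.mulVec (u 0)) (fun k => u (k + 1))
      (fun k => xs (k + 1)) := by
  obtain ⟨hx0, hdyn, hstate, hinput, hterm⟩ := h
  exact ⟨hx0 ▸ hdyn 0 N.succ_pos, fun k hk => hdyn (k + 1) (by omega),
    fun k hk => hstate (k + 1) (by omega), fun k hk => hinput (k + 1) (by omega), hterm⟩

end Trajectory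

theorem lmpc_recursive_feasibility_general
    {n m : ℕ} {ι : Type*}
    (A : Matrix (Fin n) (Fin n) ℝ) (B : Matrix (Fin n) (Fin m) ℝ)
    (X : Set (Fin n → ℝ)) (hX : Convex ℝ X)
    (U : Set (Fin m → ℝ)) (hU : Convex ℝ U)
    (z : ι → Fin n → ℝ) (hz : ∀ i, z i ∈ X)
    (v : ι → Fin m → ℝ) (hv : ∀ i, v i ∈ U)
    (hsucc : ∀ i, ∃ j, z j = A.mulVec (z i) + B.mulVec (v i))
    (N : ℕ) (hN : 1 ≤ N)
    (x : Fin n → ℝ) (u : ℕ → Fin m → ℝ) (xs : ℕ → Fin n → ℝ)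
    (hfeas : Feasible A B X U (convexHull ℝ (Set.range z)) N x u xs) :
    ∃ u' xs', Feasible A B X U (convexHull ℝ (Set.range z)) N
      (A.mulVec x + B.mulVec (u 0)) u' xs' := by
  obtain ⟨w, hw, hstep⟩ := exists_mem_convexHull_range_of_mem_convexHull_range
    A.mulVecLin B.mulVecLin z v hsucc hfeas.2.2.2.2
  have hCS : convexHull ℝ (range z) ⊆ X := convexHull_min (range_subset_iff.2 hz) hX
  have hwU : w ∈ U := convexHull_min (range_subset_iff.2 hv) hU hw
  have hshift := (hfeas.snoc hCS hwU hstep).tail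
  rw [Function.update_of_ne (by omega)] at hshift
  exact ⟨_, _, hshift⟩

/-- Recursive feasibility of the LMPC: if the problem is feasible at `x`
with first input `u 0`, then it is feasible at the successor state `A x + B (u 0)`. -/
theorem lmpc_recursive_feasibility
    {n m : ℕ} {ι : Type*} [Fintype ι] [Nonempty ι]
    (A : Matrix (Fin n) (Fin n) ℝ) (B : Matrix (Fin n) (Fin m) ℝ)
    (X : Set (Fin n → ℝ)) (hX : Convex ℝ X)
    (U : Set (Fin m → ℝ)) (hU : Convex ℝ U)
    (z : ι → Fin n → ℝ) (hz : ∀ i, z i ∈ X)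
    (v : ι → Fin m → ℝ) (hv : ∀ i, v i ∈ U)
    (hsucc : ∀ i, ∃ j, z j = A.mulVec (z i) + B.mulVec (v i))
    (N : ℕ) (hN : 1 ≤ N)
    (x : Fin n → ℝ) (u : ℕ → Fin m → ℝ) (xs : ℕ → Fin n → ℝ)
    (hfeas : Feasible A B X U (convexHull ℝ (Set.range z)) N x u xs) :
    ∃ u' xs', Feasible A B X U (convexHull ℝ (Set.range z)) N
      (A.mulVec x + B.mulVec (u 0)) u' xs' :=
  lmpc_recursive_feasibility_general A B X hX U hU z hz v hv hsucc N hN x u xs hfeas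
end

section
/- Let A be an n×n real matrix, B an n×m real matrix, X ⊆ ℝ^n and U ⊆ ℝ^m sets, h : ℝ^n × ℝ^m → ℝ nonnegative, and let N ≥ 1. Let I be a finite nonempty index set with stored states z : I → ℝ^n and stored costs c : I → ℝ with c i ≥ 0, let p be the barycentric cost function built from z and c, CS = convexHull ℝ {z i : i ∈ I}, and Q the LMPC value function. Suppose (x_t)_{t=0}^{T} and (u_t)_{t=0}^{T−1} with T ≥ N satisfy x_{t+1} = A x_t + B u_t, x_t ∈ X, u_t ∈ U, and suppose that for every t ≤ T there exists i_t ∈ I with z i_t = x_t and c i_t = ∑_{l=t}^{T−1} h(x_l, u_l). Then Q(x_0) ≤ ∑_{t=0}^{T−1} h(x_t, u_t), i.e., the LMPC value at the initial state is bounded above by the realized cost of the stored trajectory. -/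
/-- The LMPC value function `Q` with horizon `N`, stage cost `h`, terminal set `CS`
and terminal cost `p`. -/
noncomputable def lmpcValue {n m : ℕ} (A : Matrix (Fin n) (Fin n) ℝ)
    (B : Matrix (Fin n) (Fin m) ℝ) (X : Set (Fin n → ℝ)) (U : Set (Fin m → ℝ))
    (CS : Set (Fin n → ℝ)) (N : ℕ) (h : (Fin n → ℝ) → (Fin m → ℝ) → ℝ)
    (p : (Fin n → ℝ) → ℝ) (x : Fin n → ℝ) : ℝ :=
  sInf {s : ℝ | ∃ u xs, Feasible A B X U CS N x u xs ∧
    s = (∑ k ∈ Finset.range N, h (xs k) (u k)) + p (xs N)}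

/-! The stored trajectory, cut at the horizon `N`, is itself a feasible candidate: its terminal
state `x N` is a stored point `z i`, where the barycentric cost is at most `c i`, the stored
cost-to-go from time `N`, so the candidate costs at most the full realized cost. -/

section Barycentric

variable {n : ℕ} {ι : Type*} [Fintype ι] {z : ι → Fin n → ℝ} {c : ι → ℝ}

theorem barycentric_le_of_weights (hc : ∀ i, 0 ≤ c i) {lam : ι → ℝ} (hlam : ∀ i, 0 ≤ lam i)
    (hsum : ∑ i, lam i = 1) {y : Fin n → ℝ} (hy : ∑ i, lam i • z i = y) :
    barycentric z c y ≤ ∑ i, lam i * c i := by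
  refine csInf_le ⟨0, ?_⟩ ⟨lam, hlam, hsum, hy, rfl⟩
  rintro s ⟨mu, hmu, -, -, rfl⟩
  exact Finset.sum_nonneg fun i _ => mul_nonneg (hmu i) (hc i)

theorem barycentric_nonneg (hc : ∀ i, 0 ≤ c i) (y : Fin n → ℝ) : 0 ≤ barycentric z c y := by
  refine Real.sInf_nonneg ?_
  rintro s ⟨lam, hlam, -, -, rfl⟩
  exact Finset.sum_nonneg fun i _ => mul_nonneg (hlam i) (hc i)

theorem barycentric_apply_le (hc : ∀ i, 0 ≤ c i) (i : ι) :
    barycentric z c (z i) ≤ c i := by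
  classical
  have hle := barycentric_le_of_weights (z := z) (y := z i) hc (lam := Pi.single i 1)
    (fun j => by by_cases hj : j = i <;> simp [hj]) (by simp) (by simp)
  simpa [Pi.single_apply] using hle

end Barycentric

section LMPC

variable {n m : ℕ} {A : Matrix (Fin n) (Fin n) ℝ} {B : Matrix (Fin n) (Fin m) ℝ}
  {X : Set (Fin n → ℝ)} {U : Set (Fin m → ℝ)} {CS : Set (Fin n → ℝ)} {N : ℕ}

theorem feasible_of_trajectory {T : ℕ} (hT : N ≤ T) {x : ℕ → Fin n → ℝ} {u : ℕ → Fin m → ℝ}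
    (hdyn : ∀ t < T, x (t + 1) = A.mulVec (x t) + B.mulVec (u t))
    (hxX : ∀ t < T, x t ∈ X) (huU : ∀ t < T, u t ∈ U) (hCS : x N ∈ CS) :
    Feasible A B X U CS N (x 0) u x :=
  ⟨rfl, fun k hk => hdyn k (hk.trans_le hT), fun k hk => hxX k (hk.trans_le hT),
    fun k hk => huU k (hk.trans_le hT), hCS⟩

theorem lmpcValue_le_of_feasible {h : (Fin n → ℝ) → (Fin m → ℝ) → ℝ} {p : (Fin n → ℝ) → ℝ}
    (hh : ∀ x u, 0 ≤ h x u) (hp : ∀ y, 0 ≤ p y) {x : Fin n → ℝ} {u : ℕ → Fin m → ℝ}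
    {xs : ℕ → Fin n → ℝ} (hfeas : Feasible A B X U CS N x u xs) :
    lmpcValue A B X U CS N h p x ≤ (∑ k ∈ Finset.range N, h (xs k) (u k)) + p (xs N) := by
  refine csInf_le ⟨0, ?_⟩ ⟨u, xs, hfeas, rfl⟩
  rintro s ⟨u', xs', -, rfl⟩
  exact add_nonneg (Finset.sum_nonneg fun k _ => hh _ _) (hp _)

end LMPC

theorem lmpc_value_le_stored_cost_general
    {n m : ℕ} {ι : Type*} [Fintype ι]
    (A : Matrix (Fin n) (Fin n) ℝ) (B : Matrix (Fin n) (Fin m) ℝ)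
    (X : Set (Fin n → ℝ)) (U : Set (Fin m → ℝ))
    (h : (Fin n → ℝ) → (Fin m → ℝ) → ℝ) (hpos : ∀ x u, 0 ≤ h x u)
    (N : ℕ)
    (z : ι → Fin n → ℝ) (c : ι → ℝ) (hcpos : ∀ i, 0 ≤ c i)
    (T : ℕ) (hT : N ≤ T)
    (x : ℕ → Fin n → ℝ) (u : ℕ → Fin m → ℝ)
    (hdyn : ∀ t < T, x (t + 1) = A.mulVec (x t) + B.mulVec (u t))
    (hxX : ∀ t ≤ T, x t ∈ X) (huU : ∀ t < T, u t ∈ U)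
    (hstored : ∀ t ≤ T, ∃ i : ι, z i = x t ∧
      c i = ∑ l ∈ Finset.Ico t T, h (x l) (u l)) :
    lmpcValue A B X U (convexHull ℝ (Set.range z)) N h (barycentric z c) (x 0) ≤
      ∑ t ∈ Finset.range T, h (x t) (u t) := by
  obtain ⟨i, hzi, hci⟩ := hstored N hT
  have hfeas : Feasible A B X U (convexHull ℝ (Set.range z)) N (x 0) u x :=
    feasible_of_trajectory hT hdyn (fun t ht => hxX t ht.le) huU
      (hzi ▸ subset_convexHull ℝ _ ⟨i, rfl⟩)
  calc lmpcValue A B X U (convexHull ℝ (Set.range z)) N h (barycentric z c) (x 0)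
      ≤ (∑ k ∈ Finset.range N, h (x k) (u k)) + barycentric z c (x N) :=
        lmpcValue_le_of_feasible hpos (barycentric_nonneg hcpos) hfeas
    _ ≤ (∑ k ∈ Finset.range N, h (x k) (u k)) + c i := by
        rw [← hzi]
        gcongr
        exact barycentric_apply_le hcpos i
    _ = ∑ t ∈ Finset.range T, h (x t) (u t) := by
        rw [hci, Finset.sum_range_add_sum_Ico _ hT]

/-- The LMPC value at the initial state of a stored trajectory is bounded
above by the realized cost of that stored trajectory. -/
theorem lmpc_value_le_stored_cost
    {n m : ℕ} {ι : Type*} [Fintype ι] [Nonempty ι]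
    (A : Matrix (Fin n) (Fin n) ℝ) (B : Matrix (Fin n) (Fin m) ℝ)
    (X : Set (Fin n → ℝ)) (U : Set (Fin m → ℝ))
    (h : (Fin n → ℝ) → (Fin m → ℝ) → ℝ) (hpos : ∀ x u, 0 ≤ h x u)
    (N : ℕ) (hN : 1 ≤ N)
    (z : ι → Fin n → ℝ) (c : ι → ℝ) (hcpos : ∀ i, 0 ≤ c i)
    (T : ℕ) (hT : N ≤ T)
    (x : ℕ → Fin n → ℝ) (u : ℕ → Fin m → ℝ)
    (hdyn : ∀ t < T, x (t + 1) = A.mulVec (x t) + B.mulVec (u t))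
    (hxX : ∀ t ≤ T, x t ∈ X) (huU : ∀ t < T, u t ∈ U)
    (hstored : ∀ t ≤ T, ∃ i : ι, z i = x t ∧
      c i = ∑ l ∈ Finset.Ico t T, h (x l) (u l)) :
    lmpcValue A B X U (convexHull ℝ (Set.range z)) N h (barycentric z c) (x 0) ≤
      ∑ t ∈ Finset.range T, h (x t) (u t) :=
  lmpc_value_le_stored_cost_general A B X U h hpos N z c hcpos T hT x u hdyn hxX huU hstored
end

section
/- Let A be an n×n real matrix, B an n×m real matrix, X ⊆ ℝ^n and U ⊆ ℝ^m convex sets, and h : ℝ^n × ℝ^m → ℝ jointly convex and nonnegative. Let I be a finite nonempty index set with stored states z : I → ℝ^n and stored costs c : I → ℝ, p the barycentric cost function from z and c, CS = convexHull ℝ {z i : i ∈ I}, and Q the LMPC value function with horizon N ≥ 1. Then the set D of feasible initial states (states x for which the LMPC problem admits a feasible solution) is a convex subset of ℝ^n, and Q is convex on D, i.e., ConvexOn ℝ D Q. -/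
/-!
Both `barycentric z c` and the LMPC value are parametric infima `x ↦ inf {g y | P x y}` with `g`
convex and the graph of `P` convex. Such an infimum is convex on the set of `x` admitting some
`y`: near-optimal witnesses `y, y'` for `x, x'` combine into the feasible witness
`a • y + b • y'` for `a • x + b • x'`, whose cost is at most `a * g y + b * g y'`. LMPC
feasibility has a convex graph because the dynamics are linear and `X`, `U`, `CS` are convex;
both costs are bounded below by `⨅ i, c i` (using `h ≥ 0`), which keeps `sInf` away from its
junk value.
-/

open Finset Set

section ParametricInf

variable {E F : Type*}

noncomputable def parametricInf (P : E → F → Prop) (g : F → ℝ) (x : E) : ℝ :=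
  sInf (g '' {y | P x y})

variable {P : E → F → Prop} {g : F → ℝ} {x : E}

theorem parametricInf_le (hg : BddBelow (g '' {y | ∃ x, P x y})) {y : F} (hy : P x y) :
    parametricInf P g x ≤ g y :=
  csInf_le (hg.mono (Set.image_mono fun _ hy ↦ by exact ⟨x, hy⟩)) (Set.mem_image_of_mem g hy)

theorem le_parametricInf {M : ℝ} (hx : ∃ y, P x y) (hM : ∀ y, P x y → M ≤ g y) :
    M ≤ parametricInf P g x :=
  le_csInf (Set.Nonempty.image g hx) (forall_mem_image.2 hM)

theorem exists_lt_parametricInf_add (hx : ∃ y, P x y) {ε : ℝ} (hε : 0 < ε) :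
    ∃ y, P x y ∧ g y < parametricInf P g x + ε := by
  obtain ⟨_, ⟨y, hy, rfl⟩, hlt⟩ :=
    Real.lt_sInf_add_pos (Set.Nonempty.image g hx) hε
  exact ⟨y, hy, hlt⟩

variable [AddCommGroup E] [Module ℝ E] [AddCommGroup F] [Module ℝ F]

theorem Convex.setOf_exists_right (hP : Convex ℝ {q : E × F | P q.1 q.2}) :
    Convex ℝ {x | ∃ y, P x y} := by
  rintro x ⟨y, hy⟩ x' ⟨y', hy'⟩ a b ha hb hab
  exact ⟨a • y + b • y', hP (x := (x, y)) hy (y := (x', y')) hy' ha hb hab⟩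

theorem Convex.setOf_exists_left (hP : Convex ℝ {q : E × F | P q.1 q.2}) :
    Convex ℝ {y | ∃ x, P x y} := by
  rintro y ⟨x, hy⟩ y' ⟨x', hy'⟩ a b ha hb hab
  exact ⟨a • x + b • x', hP (x := (x, y)) hy (y := (x', y')) hy' ha hb hab⟩

theorem convexOn_parametricInf (hP : Convex ℝ {q : E × F | P q.1 q.2})
    (hg : ConvexOn ℝ {y | ∃ x, P x y} g) (hg_bdd : BddBelow (g '' {y | ∃ x, P x y})) :
    ConvexOn ℝ {x | ∃ y, P x y} (parametricInf P g) := by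
  refine ⟨hP.setOf_exists_right, fun x hx x' hx' a b ha hb hab ↦ ?_⟩
  refine le_of_forall_pos_le_add fun ε hε ↦ ?_
  obtain ⟨y, hy, hyε⟩ := exists_lt_parametricInf_add (g := g) hx hε
  obtain ⟨y', hy', hy'ε⟩ := exists_lt_parametricInf_add (g := g) hx' hε
  have hcomb : P (a • x + b • x') (a • y + b • y') :=
    hP (x := (x, y)) hy (y := (x', y')) hy' ha hb hab
  calc parametricInf P g (a • x + b • x')
      ≤ g (a • y + b • y') := parametricInf_le hg_bdd hcomb
    _ ≤ a * g y + b * g y' := hg.2 (⟨x, hy⟩ : ∃ x, P x y) (⟨x', hy'⟩ : ∃ x, P x y') ha hb hab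
    _ ≤ a * (parametricInf P g x + ε) + b * (parametricInf P g x' + ε) := by
        gcongr
    _ = a • parametricInf P g x + b • parametricInf P g x' + ε := by
        simp only [smul_eq_mul]
        linear_combination ε * hab

end ParametricInf

section Barycentric

variable {ι E : Type*} [Fintype ι] [AddCommGroup E] [Module ℝ E]

def IsBarycentricWeights (z : ι → E) (x : E) (w : ι → ℝ) : Prop :=
  w ∈ stdSimplex ℝ ι ∧ ∑ i, w i • z i = x

theorem convex_isBarycentricWeights_graph (z : ι → E) :
    Convex ℝ {q : E × (ι → ℝ) | IsBarycentricWeights z q.1 q.2} := by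
  rintro ⟨x, w⟩ ⟨hw, hx : ∑ i, w i • z i = x⟩ ⟨x', w'⟩ ⟨hw', hx' : ∑ i, w' i • z i = x'⟩
    a b ha hb hab
  refine ⟨convex_stdSimplex ℝ ι hw hw' ha hb hab, ?_⟩
  subst hx hx'
  simp only [Prod.smul_mk, Prod.mk_add_mk, Pi.add_apply, Pi.smul_apply, smul_eq_mul, add_smul,
    mul_smul, sum_add_distrib, smul_sum]

theorem setOf_exists_isBarycentricWeights (z : ι → E) :
    {x | ∃ w, IsBarycentricWeights z x w} = convexHull ℝ (range z) := by
  classical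
  refine Subset.antisymm (fun x ⟨w, ⟨hw₀, hw₁⟩, hx⟩ ↦
    mem_convexHull_of_exists_fintype w z hw₀ hw₁ (mem_range_self ·) hx)
    (convexHull_min ?_ (convex_isBarycentricWeights_graph z).setOf_exists_right)
  rintro _ ⟨i, rfl⟩
  exact ⟨Pi.single i 1, single_mem_stdSimplex ℝ i, by simp [Pi.single_apply]⟩

theorem iInf_le_sum_mul_of_mem_stdSimplex (c : ι → ℝ) {w : ι → ℝ} (hw : w ∈ stdSimplex ℝ ι) :
    ⨅ i, c i ≤ ∑ i, w i * c i :=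
  calc ⨅ i, c i = ∑ i, w i * ⨅ i, c i := by rw [← sum_mul, hw.2, one_mul]
    _ ≤ ∑ i, w i * c i := by
        gcongr with i
        · exact hw.1 i
        · exact ciInf_le (Set.finite_range c).bddBelow i

variable {n : ℕ} (z : ι → Fin n → ℝ) (c : ι → ℝ)

theorem barycentric_eq_parametricInf :
    barycentric z c = parametricInf (IsBarycentricWeights z) (fun w ↦ ∑ i, w i * c i) := by
  ext x
  unfold barycentric parametricInf IsBarycentricWeights stdSimplex
  congr 1
  ext s
  simp only [mem_ofPred_eq, mem_image, and_assoc, eq_comm]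

theorem iInf_le_barycentric {x : Fin n → ℝ} (hx : x ∈ convexHull ℝ (range z)) :
    ⨅ i, c i ≤ barycentric z c x := by
  rw [← setOf_exists_isBarycentricWeights] at hx
  rw [barycentric_eq_parametricInf]
  exact le_parametricInf hx fun w hw ↦ iInf_le_sum_mul_of_mem_stdSimplex c hw.1

theorem convexOn_barycentric : ConvexOn ℝ (convexHull ℝ (range z)) (barycentric z c) := by
  have hgraph := convex_isBarycentricWeights_graph z
  have hlin : ConvexOn ℝ {w | ∃ x, IsBarycentricWeights z x w} (fun w ↦ ∑ i, w i * c i) :=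
    ⟨hgraph.setOf_exists_left, fun w _ w' _ a b _ _ _ ↦ le_of_eq <| by
      simp only [Pi.add_apply, Pi.smul_apply, smul_eq_mul, add_mul, sum_add_distrib, mul_sum,
        mul_assoc]⟩
  have hbdd : BddBelow ((fun w ↦ ∑ i, w i * c i) '' {w | ∃ x, IsBarycentricWeights z x w}) :=
    ⟨⨅ i, c i, forall_mem_image.2 fun w ⟨_, hw⟩ ↦ iInf_le_sum_mul_of_mem_stdSimplex c hw.1⟩
  rw [barycentric_eq_parametricInf, ← setOf_exists_isBarycentricWeights]
  exact convexOn_parametricInf hgraph hlin hbdd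

end Barycentric

section Lmpc

variable {n m : ℕ}

def lmpcCost (N : ℕ) (h : (Fin n → ℝ) → (Fin m → ℝ) → ℝ) (p : (Fin n → ℝ) → ℝ)
    (q : (ℕ → Fin m → ℝ) × (ℕ → Fin n → ℝ)) : ℝ :=
  ∑ k ∈ range N, h (q.2 k) (q.1 k) + p (q.2 N)

theorem lmpcValue_eq_parametricInf (A : Matrix (Fin n) (Fin n) ℝ) (B : Matrix (Fin n) (Fin m) ℝ)
    (X : Set (Fin n → ℝ)) (U : Set (Fin m → ℝ)) (CS : Set (Fin n → ℝ)) (N : ℕ)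
    (h : (Fin n → ℝ) → (Fin m → ℝ) → ℝ) (p : (Fin n → ℝ) → ℝ) :
    lmpcValue A B X U CS N h p =
      parametricInf (fun x q ↦ Feasible A B X U CS N x q.1 q.2) (lmpcCost N h p) := by
  ext x
  unfold lmpcValue parametricInf lmpcCost
  congr 1
  ext s
  simp only [mem_ofPred_eq, mem_image, Prod.exists, eq_comm]

theorem convex_feasible_graph {A : Matrix (Fin n) (Fin n) ℝ} {B : Matrix (Fin n) (Fin m) ℝ}
    {X : Set (Fin n → ℝ)} {U : Set (Fin m → ℝ)} {CS : Set (Fin n → ℝ)} (N : ℕ)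
    (hX : Convex ℝ X) (hU : Convex ℝ U) (hCS : Convex ℝ CS) :
    Convex ℝ {r : (Fin n → ℝ) × (ℕ → Fin m → ℝ) × (ℕ → Fin n → ℝ) |
      Feasible A B X U CS N r.1 r.2.1 r.2.2} := by
  rintro ⟨x, u, xs⟩ (hr : Feasible A B X U CS N x u xs) ⟨x', u', xs'⟩
    (hr' : Feasible A B X U CS N x' u' xs') a b ha hb hab
  obtain ⟨hx, hdyn, hxX, huU, hxCS⟩ := hr
  obtain ⟨hx', hdyn', hxX', huU', hxCS'⟩ := hr'
  refine ⟨?_, fun k hk ↦ ?_, fun k hk ↦ hX (hxX k hk) (hxX' k hk) ha hb hab,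
    fun k hk ↦ hU (huU k hk) (huU' k hk) ha hb hab, hCS hxCS hxCS' ha hb hab⟩
  · simp only [Prod.smul_mk, Prod.mk_add_mk, Pi.add_apply, Pi.smul_apply, ← hx, ← hx']
  · simp only [Prod.smul_mk, Prod.mk_add_mk, Pi.add_apply, Pi.smul_apply, hdyn k hk,
      hdyn' k hk, Matrix.mulVec_add, Matrix.mulVec_smul]
    module

theorem convexOn_lmpcCost {h : (Fin n → ℝ) → (Fin m → ℝ) → ℝ} {p : (Fin n → ℝ) → ℝ}
    {CS : Set (Fin n → ℝ)} (N : ℕ)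
    (hh : ConvexOn ℝ univ fun q : (Fin n → ℝ) × (Fin m → ℝ) ↦ h q.1 q.2)
    (hp : ConvexOn ℝ CS p) :
    ConvexOn ℝ {q | q.2 N ∈ CS} (lmpcCost N h p) := by
  refine ⟨fun q hq q' hq' a b ha hb hab ↦ hp.1 hq hq' ha hb hab,
    fun q hq q' hq' a b ha hb hab ↦ ?_⟩
  have hstage (k : ℕ) :
      h (a • q.2 k + b • q'.2 k) (a • q.1 k + b • q'.1 k) ≤
        a * h (q.2 k) (q.1 k) + b * h (q'.2 k) (q'.1 k) :=
    hh.2 (mem_univ (q.2 k, q.1 k)) (mem_univ (q'.2 k, q'.1 k)) ha hb hab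
  calc lmpcCost N h p (a • q + b • q')
      ≤ ∑ k ∈ range N, (a * h (q.2 k) (q.1 k) + b * h (q'.2 k) (q'.1 k)) +
          (a * p (q.2 N) + b * p (q'.2 N)) :=
        add_le_add (sum_le_sum fun k _ ↦ hstage k) (hp.2 hq hq' ha hb hab)
    _ = a • lmpcCost N h p q + b • lmpcCost N h p q' := by
        simp only [lmpcCost, smul_eq_mul, sum_add_distrib, ← Finset.mul_sum]
        ring

theorem iInf_le_lmpcCost {ι : Type*} [Fintype ι] {h : (Fin n → ℝ) → (Fin m → ℝ) → ℝ}
    (hpos : ∀ x u, 0 ≤ h x u) (z : ι → Fin n → ℝ) (c : ι → ℝ) {N : ℕ}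
    {q : (ℕ → Fin m → ℝ) × (ℕ → Fin n → ℝ)} (hq : q.2 N ∈ convexHull ℝ (range z)) :
    ⨅ i, c i ≤ lmpcCost N h (barycentric z c) q :=
  le_add_of_nonneg_of_le (sum_nonneg fun _ _ ↦ hpos _ _) (iInf_le_barycentric z c hq)

end Lmpc

theorem lmpc_value_convexOn_general
    {n m : ℕ} {ι : Type*} [Fintype ι]
    (A : Matrix (Fin n) (Fin n) ℝ) (B : Matrix (Fin n) (Fin m) ℝ)
    (X : Set (Fin n → ℝ)) (hX : Convex ℝ X)
    (U : Set (Fin m → ℝ)) (hU : Convex ℝ U)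
    (h : (Fin n → ℝ) → (Fin m → ℝ) → ℝ)
    (hconv : ConvexOn ℝ Set.univ (fun q : (Fin n → ℝ) × (Fin m → ℝ) => h q.1 q.2))
    (hpos : ∀ x u, 0 ≤ h x u)
    (z : ι → Fin n → ℝ) (c : ι → ℝ)
    (N : ℕ) :
    Convex ℝ {x : Fin n → ℝ |
        ∃ u xs, Feasible A B X U (convexHull ℝ (Set.range z)) N x u xs} ∧
      ConvexOn ℝ
        {x : Fin n → ℝ |
          ∃ u xs, Feasible A B X U (convexHull ℝ (Set.range z)) N x u xs}
        (lmpcValue A B X U (convexHull ℝ (Set.range z)) N h (barycentric z c)) := by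
  let P x (q : (ℕ → Fin m → ℝ) × (ℕ → Fin n → ℝ)) :=
    Feasible A B X U (convexHull ℝ (range z)) N x q.1 q.2
  have hgraph : Convex ℝ {r : _ × _ | P r.1 r.2} :=
    convex_feasible_graph N hX hU (convex_convexHull ℝ (range z))
  have hcost := (convexOn_lmpcCost N hconv (convexOn_barycentric z c)).subset
    (by rintro _ ⟨_, hq⟩; exact hq.2.2.2.2) hgraph.setOf_exists_left
  have hbdd : BddBelow (lmpcCost N h (barycentric z c) '' {q | ∃ x, P x q}) := by
    refine ⟨⨅ i, c i, forall_mem_image.2 ?_⟩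
    rintro _ ⟨_, hq⟩
    exact iInf_le_lmpcCost hpos z c hq.2.2.2.2
  have hvalue := convexOn_parametricInf hgraph hcost hbdd
  simp only [Prod.exists] at hvalue
  rw [lmpcValue_eq_parametricInf]
  exact ⟨hvalue.1, hvalue⟩

/-- The set of feasible initial states of the LMPC is convex, and the
LMPC value function is convex on it. -/
theorem lmpc_value_convexOn
    {n m : ℕ} {ι : Type*} [Fintype ι] [Nonempty ι]
    (A : Matrix (Fin n) (Fin n) ℝ) (B : Matrix (Fin n) (Fin m) ℝ)
    (X : Set (Fin n → ℝ)) (hX : Convex ℝ X)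
    (U : Set (Fin m → ℝ)) (hU : Convex ℝ U)
    (h : (Fin n → ℝ) → (Fin m → ℝ) → ℝ)
    (hconv : ConvexOn ℝ Set.univ (fun q : (Fin n → ℝ) × (Fin m → ℝ) => h q.1 q.2))
    (hpos : ∀ x u, 0 ≤ h x u)
    (z : ι → Fin n → ℝ) (c : ι → ℝ)
    (N : ℕ) (hN : 1 ≤ N) :
    Convex ℝ {x : Fin n → ℝ |
        ∃ u xs, Feasible A B X U (convexHull ℝ (Set.range z)) N x u xs} ∧
      ConvexOn ℝ
        {x : Fin n → ℝ |
          ∃ u xs, Feasible A B X U (convexHull ℝ (Set.range z)) N x u xs}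
        (lmpcValue A B X U (convexHull ℝ (Set.range z)) N h (barycentric z c)) :=
  lmpc_value_convexOn_general A B X hX U hU h hconv hpos z c N
end

section
/- Let I ⊆ I' be finite nonempty index sets, z' : I' → ℝ^n and c' : I' → ℝ, and let z, c be the restrictions of z', c' to I. Let p and p' be the barycentric cost functions built from (z, c) and (z', c') respectively. Then for every x in the convex hull of {z i : i ∈ I} one has p'(x) ≤ p(x). Consequently, for fixed A, B, X, U, h and horizon N, the LMPC value functions Q (with terminal set convexHull ℝ {z i : i ∈ I} and terminal cost p) and Q' (with terminal set convexHull ℝ {z' i : i ∈ I'} and terminal cost p') satisfy Q'(x) ≤ Q(x) at every state x that is feasible for the problem defining Q, provided h ≥ 0 and c' i ≥ 0 for all i ∈ I'. -/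
/-- The barycentric cost function built from the stored points `z i` and stored costs
`c i` for indices `i` in the finite index set `S`:
`p(x) = sInf { ∑ i ∈ S, λ i * c i : λ ≥ 0 on S, ∑_{i ∈ S} λ i = 1, ∑_{i ∈ S} λ i • z i = x }`. -/
noncomputable def barycentricOn {n : ℕ} {ι : Type*} (S : Finset ι)
    (z : ι → Fin n → ℝ) (c : ι → ℝ) (x : Fin n → ℝ) : ℝ :=
  sInf {s : ℝ | ∃ lam : ι → ℝ, (∀ i ∈ S, 0 ≤ lam i) ∧ (∑ i ∈ S, lam i) = 1 ∧
    (∑ i ∈ S, lam i • z i) = x ∧ s = ∑ i ∈ S, lam i * c i}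

/-!
Convex weights on `I` extended by zero are convex weights on `I' ⊇ I` with the same barycentre
and the same cost, so the infimum defining `p'(x)` runs over a larger set than the one defining
`p(x)`; that set is nonempty because `x` lies in the old convex hull, and nonnegative costs keep
both infima bounded below. The value functions then compare trajectory by trajectory: the old
terminal set lies in the new one, and on it the new terminal cost is the smaller one.
-/

open Finset

section ConvexWeights

variable {ι 𝕜 E : Type*} [Semiring 𝕜] [PartialOrder 𝕜] [IsOrderedRing 𝕜]
  [AddCommMonoid E] [Module 𝕜 E]

theorem exists_weights_of_mem_convexHull_image (S : Finset ι) (z : ι → E) {x : E}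
    (hx : x ∈ convexHull 𝕜 (z '' S)) :
    ∃ w : ι → 𝕜, (∀ i ∈ S, 0 ≤ w i) ∧ ∑ i ∈ S, w i = 1 ∧ ∑ i ∈ S, w i • z i = x := by
  classical
  refine convexHull_min (t := {x | ∃ w : ι → 𝕜, (∀ i ∈ S, 0 ≤ w i) ∧ ∑ i ∈ S, w i = 1 ∧
    ∑ i ∈ S, w i • z i = x}) ?_ ?_ hx
  · rintro _ ⟨j, hj, rfl⟩
    refine ⟨Pi.single j 1, fun i _ => ?_, ?_, ?_⟩
    · by_cases hij : i = j <;> simp [hij]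
    · simp [sum_pi_single', mem_coe.1 hj]
    · simp [Pi.single_apply, ite_smul, mem_coe.1 hj]
  · rintro _ ⟨w, hw₀, hw₁, rfl⟩ _ ⟨w', hw₀', hw₁', rfl⟩ a b ha hb hab
    refine ⟨a • w + b • w', fun i hi => ?_, ?_, ?_⟩
    · simpa using add_nonneg (mul_nonneg ha (hw₀ i hi)) (mul_nonneg hb (hw₀' i hi))
    · simp [sum_add_distrib, ← mul_sum, hw₁, hw₁', hab]
    · simp [add_smul, mul_smul, sum_add_distrib, ← smul_sum]

end ConvexWeights

section Barycentric

variable {n : ℕ} {ι : Type*} {S T : Finset ι} {z : ι → Fin n → ℝ} {c : ι → ℝ}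

theorem barycentricOn_nonneg (hc : ∀ i ∈ S, 0 ≤ c i) (x : Fin n → ℝ) :
    0 ≤ barycentricOn S z c x := by
  refine Real.sInf_nonneg fun s hs => ?_
  obtain ⟨lam, hlam, -, -, rfl⟩ := hs
  exact sum_nonneg fun i hi => mul_nonneg (hlam i hi) (hc i hi)

theorem barycentricOn_le_of_subset (hST : S ⊆ T) (hc : ∀ i ∈ T, 0 ≤ c i) {x : Fin n → ℝ}
    (hx : x ∈ convexHull ℝ (z '' S)) :
    barycentricOn T z c x ≤ barycentricOn S z c x := by
  refine csInf_le_csInf ⟨0, ?_⟩ ?_ ?_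
  · rintro _ ⟨lam, hlam, -, -, rfl⟩
    exact sum_nonneg fun i hi => mul_nonneg (hlam i hi) (hc i hi)
  · obtain ⟨lam, hlam₀, hlam₁, hlamx⟩ := exists_weights_of_mem_convexHull_image S z hx
    exact ⟨_, lam, hlam₀, hlam₁, hlamx, rfl⟩
  · rintro _ ⟨lam, hlam₀, hlam₁, hlamx, rfl⟩
    refine ⟨(S : Set ι).indicator lam, fun i _ => Set.indicator_nonneg hlam₀ i, ?_, ?_, ?_⟩
    · rwa [sum_indicator_subset lam hST]
    · simp_rw [← Set.indicator_smul_apply_left]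
      rwa [sum_indicator_subset _ hST]
    · simp_rw [← Set.indicator_mul_left]
      rw [sum_indicator_subset _ hST]

end Barycentric

section ValueFunction

variable {n m : ℕ} {A : Matrix (Fin n) (Fin n) ℝ} {B : Matrix (Fin n) (Fin m) ℝ}
  {X : Set (Fin n → ℝ)} {U : Set (Fin m → ℝ)} {CS CS' : Set (Fin n → ℝ)} {N : ℕ}
  {x : Fin n → ℝ} {u : ℕ → Fin m → ℝ} {xs : ℕ → Fin n → ℝ}

theorem Feasible.mono (hf : Feasible A B X U CS N x u xs) (hCS : CS ⊆ CS') :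
    Feasible A B X U CS' N x u xs :=
  let ⟨h₀, hdyn, hX, hU, hN⟩ := hf
  ⟨h₀, hdyn, hX, hU, hCS hN⟩

theorem lmpcValue_le_of_subset {h : (Fin n → ℝ) → (Fin m → ℝ) → ℝ}
    {p p' : (Fin n → ℝ) → ℝ} (hh : ∀ x u, 0 ≤ h x u) (hp' : BddBelow (p' '' CS'))
    (hCS : CS ⊆ CS') (hpp' : ∀ y ∈ CS, p' y ≤ p y) (hx : ∃ u xs, Feasible A B X U CS N x u xs) :
    lmpcValue A B X U CS' N h p' x ≤ lmpcValue A B X U CS N h p x := by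
  obtain ⟨u, xs, hf⟩ := hx
  obtain ⟨b, hb⟩ := hp'
  have hbdd : BddBelow {s : ℝ | ∃ u xs, Feasible A B X U CS' N x u xs ∧
      s = (∑ k ∈ range N, h (xs k) (u k)) + p' (xs N)} := by
    refine ⟨b, ?_⟩
    rintro _ ⟨u, xs, ⟨-, -, -, -, hN⟩, rfl⟩
    exact le_add_of_nonneg_of_le (sum_nonneg fun k _ => hh _ _) (hb ⟨_, hN, rfl⟩)
  refine le_csInf ⟨_, u, xs, hf, rfl⟩ ?_
  rintro _ ⟨u', xs', hf', rfl⟩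
  calc lmpcValue A B X U CS' N h p' x
      ≤ (∑ k ∈ range N, h (xs' k) (u' k)) + p' (xs' N) :=
        csInf_le hbdd ⟨u', xs', hf'.mono hCS, rfl⟩
    _ ≤ (∑ k ∈ range N, h (xs' k) (u' k)) + p (xs' N) := by
        gcongr; exact hpp' _ hf'.2.2.2.2

end ValueFunction

theorem enlarging_safe_set_decreases_cost_general
    {n m : ℕ} {ι : Type*} (I I' : Finset ι) (hII' : I ⊆ I')
    (z : ι → Fin n → ℝ) (c : ι → ℝ)
    (A : Matrix (Fin n) (Fin n) ℝ) (B : Matrix (Fin n) (Fin m) ℝ)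
    (X : Set (Fin n → ℝ)) (U : Set (Fin m → ℝ))
    (h : (Fin n → ℝ) → (Fin m → ℝ) → ℝ) (hpos : ∀ x u, 0 ≤ h x u)
    (hcpos : ∀ i ∈ I', 0 ≤ c i)
    (N : ℕ) :
    (∀ x ∈ convexHull ℝ (z '' ↑I), barycentricOn I' z c x ≤ barycentricOn I z c x) ∧
    (∀ x : Fin n → ℝ,
      (∃ u xs, Feasible A B X U (convexHull ℝ (z '' ↑I)) N x u xs) →
      lmpcValue A B X U (convexHull ℝ (z '' ↑I')) N h (barycentricOn I' z c) x ≤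
        lmpcValue A B X U (convexHull ℝ (z '' ↑I)) N h (barycentricOn I z c) x) := by
  have hcost : ∀ x ∈ convexHull ℝ (z '' ↑I), barycentricOn I' z c x ≤ barycentricOn I z c x :=
    fun x hx => barycentricOn_le_of_subset hII' hcpos hx
  have hbdd : BddBelow (barycentricOn I' z c '' convexHull ℝ (z '' ↑I')) :=
    ⟨0, by rintro _ ⟨y, -, rfl⟩; exact barycentricOn_nonneg hcpos y⟩
  exact ⟨hcost, fun x hx => lmpcValue_le_of_subset hpos hbdd
    (convexHull_mono (Set.image_mono (coe_subset.2 hII'))) hcost hx⟩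

/-- Enlarging the sampled safe set from index set `I` to `I' ⊇ I` can only
decrease the barycentric terminal cost (on the old convex safe set) and the LMPC value
function (at states feasible for the old problem). -/
theorem enlarging_safe_set_decreases_cost
    {n m : ℕ} {ι : Type*} (I I' : Finset ι) (hIne : I.Nonempty) (hII' : I ⊆ I')
    (z : ι → Fin n → ℝ) (c : ι → ℝ)
    (A : Matrix (Fin n) (Fin n) ℝ) (B : Matrix (Fin n) (Fin m) ℝ)
    (X : Set (Fin n → ℝ)) (U : Set (Fin m → ℝ))
    (h : (Fin n → ℝ) → (Fin m → ℝ) → ℝ) (hpos : ∀ x u, 0 ≤ h x u)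
    (hcpos : ∀ i ∈ I', 0 ≤ c i)
    (N : ℕ) (hN : 1 ≤ N) :
    (∀ x ∈ convexHull ℝ (z '' ↑I), barycentricOn I' z c x ≤ barycentricOn I z c x) ∧
    (∀ x : Fin n → ℝ,
      (∃ u xs, Feasible A B X U (convexHull ℝ (z '' ↑I)) N x u xs) →
      lmpcValue A B X U (convexHull ℝ (z '' ↑I')) N h (barycentricOn I' z c) x ≤
        lmpcValue A B X U (convexHull ℝ (z '' ↑I)) N h (barycentricOn I z c) x) :=
  enlarging_safe_set_decreases_cost_general I I' hII' z c A B X U h hpos hcpos N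
end
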